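/- arXiv:2101.10491 — 2 statements merged into one kernel-verified Lean document; each statement's English description precedes it below -/
import Mathlib

section
/- In a reverse differential restriction category, the reverse differential operator is monotone: if f ≤ g (i.e., f̄ g = f), then R[f] ≤ R[g]. -/
open CategoryTheory

universe v u

/-- A restriction category: a category with a restriction operator `rst`
satisfying the four Cockett–Lack axioms R1–R4. -/
class RestrictionCat (C : Type u) [Category.{v} C] where
  rst : ∀ {A B : C}, (A ⟶ B) → (A ⟶ A)
  rst_comp : ∀ {A B : C} (f : A ⟶ B), rst f ≫ f = f
  rst_comm : ∀ {A B B' : C} (f : A ⟶ B) (g : A ⟶ B'), rst f ≫ rst g = rst g ≫ rst f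
  rst_rst : ∀ {A B B' : C} (f : A ⟶ B) (g : A ⟶ B'), rst (rst g ≫ f) = rst g ≫ rst f
  rst_slide : ∀ {A B D : C} (f : A ⟶ B) (g : B ⟶ D), f ≫ rst g = rst (f ≫ g) ≫ f

open RestrictionCat

/-- The canonical partial order on hom-sets: `f ≤ g` iff `rst f ≫ g = f`. -/
def rle {C : Type u} [Category.{v} C] [RestrictionCat C] {A B : C} (f g : A ⟶ B) : Prop :=
  rst f ≫ g = f

/-- A Cartesian left additive restriction category: a restriction category with
(lax) restriction products and a left additive structure on hom-sets. -/
class CLARC (C : Type u) [Category.{v} C] extends RestrictionCat C where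
  prod : C → C → C
  pair : ∀ {A B B' : C}, (A ⟶ B) → (A ⟶ B') → (A ⟶ prod B B')
  p0 : ∀ {B B' : C}, prod B B' ⟶ B
  p1 : ∀ {B B' : C}, prod B B' ⟶ B'
  pair_p0 : ∀ {A B B' : C} (f : A ⟶ B) (g : A ⟶ B'), pair f g ≫ p0 = rst g ≫ f
  pair_p1 : ∀ {A B B' : C} (f : A ⟶ B) (g : A ⟶ B'), pair f g ≫ p1 = rst f ≫ g
  pair_eta : ∀ {A B B' : C} (h : A ⟶ prod B B'), pair (h ≫ p0) (h ≫ p1) = h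
  comp_pair : ∀ {X A B B' : C} (x : X ⟶ A) (f : A ⟶ B) (g : A ⟶ B'),
    x ≫ pair f g = pair (x ≫ f) (x ≫ g)
  add : ∀ {A B : C}, (A ⟶ B) → (A ⟶ B) → (A ⟶ B)
  zero : ∀ {A B : C}, A ⟶ B
  add_assoc : ∀ {A B : C} (f g h : A ⟶ B), add (add f g) h = add f (add g h)
  add_comm : ∀ {A B : C} (f g : A ⟶ B), add f g = add g f
  add_zero : ∀ {A B : C} (f : A ⟶ B), add f zero = f
  comp_add : ∀ {X A B : C} (x : X ⟶ A) (f g : A ⟶ B),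
    x ≫ add f g = add (x ≫ f) (x ≫ g)
  zero_comp_le : ∀ {A B D : C} (f : B ⟶ D),
    rst ((zero : A ⟶ B) ≫ f) ≫ (zero : A ⟶ D) = (zero : A ⟶ B) ≫ f
  zero_total : ∀ {A B : C}, rst (zero : A ⟶ B) = 𝟙 A
  add_p0 : ∀ {A B B' : C} (f g : A ⟶ prod B B'),
    add f g ≫ p0 = add (f ≫ p0) (g ≫ p0)
  add_p1 : ∀ {A B B' : C} (f g : A ⟶ prod B B'),
    add f g ≫ p1 = add (f ≫ p1) (g ≫ p1)
  zero_p0 : ∀ {A B B' : C}, (zero : A ⟶ prod B B') ≫ p0 = (zero : A ⟶ B)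
  zero_p1 : ∀ {A B B' : C}, (zero : A ⟶ prod B B') ≫ p1 = (zero : A ⟶ B')

open CLARC

/-- A reverse differential restriction category: a Cartesian left additive
restriction category equipped with a reverse differential operator `Rd`
satisfying axioms RD.1–RD.9. -/
class RDRC (C : Type u) [Category.{v} C] extends CLARC C where
  Rd : ∀ {A B : C}, (A ⟶ B) → (prod A B ⟶ A)
  RD1a : ∀ {A B : C} (f g : A ⟶ B), Rd (add f g) = add (Rd f) (Rd g)
  RD1b : ∀ {A B : C}, Rd (zero : A ⟶ B) = zero
  RD2a : ∀ {X A B : C} (a : X ⟶ A) (b c : X ⟶ B) (f : A ⟶ B),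
    pair a (add b c) ≫ Rd f = add (pair a b ≫ Rd f) (pair a c ≫ Rd f)
  RD2b : ∀ {X A B : C} (a : X ⟶ A) (f : A ⟶ B),
    pair a (zero : X ⟶ B) ≫ Rd f = rst (a ≫ f) ≫ zero
  RD3a : ∀ {A B : C}, Rd (p0 : prod A B ⟶ A) = p1 ≫ pair (𝟙 A) (zero : A ⟶ B)
  RD3b : ∀ {A B : C}, Rd (p1 : prod A B ⟶ B) = p1 ≫ pair (zero : B ⟶ A) (𝟙 B)
  RD4 : ∀ {A B B' : C} (f : A ⟶ B) (g : A ⟶ B'),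
    Rd (pair f g) = add (pair p0 (p1 ≫ p0) ≫ Rd f) (pair p0 (p1 ≫ p1) ≫ Rd g)
  RD5 : ∀ {A B D : C} (f : A ⟶ B) (g : B ⟶ D),
    Rd (f ≫ g) = pair p0 (pair (p0 ≫ f) p1 ≫ Rd g) ≫ Rd f
  RD6 : ∀ {A B : C} (f : A ⟶ B),
    pair (pair p0 (p1 ≫ p0)) (pair (p0 ≫ (zero : A ⟶ A)) (p1 ≫ p1)) ≫
      pair (p0 ≫ pair (p0 ≫ pair (𝟙 A) (zero : A ⟶ B)) p1) p1 ≫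
      Rd (Rd (Rd f)) ≫ p1
    = pair p0 (p1 ≫ p1) ≫ Rd f
  RD7 : ∀ {A B : C} (f : A ⟶ B),
    pair (pair p0 (zero : prod (prod A A) (prod A A) ⟶ B)) p1 ≫
      Rd (Rd (pair (pair p0 (zero : prod A A ⟶ B)) p1 ≫ Rd (Rd f) ≫ p1)) ≫ p1
    = pair (pair (p0 ≫ p0) (p1 ≫ p0)) (pair (p0 ≫ p1) (p1 ≫ p1)) ≫
      pair (pair p0 (zero : prod (prod A A) (prod A A) ⟶ B)) p1 ≫
      Rd (Rd (pair (pair p0 (zero : prod A A ⟶ B)) p1 ≫ Rd (Rd f) ≫ p1)) ≫ p1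
  RD8 : ∀ {A B : C} (f : A ⟶ B), rst (Rd f) = pair (p0 ≫ rst f) p1
  RD9 : ∀ {A B : C} (f : A ⟶ B), Rd (rst f) = pair (p0 ≫ rst f) p1 ≫ p1

open RDRC

section Aux

variable {C : Type u} [Category.{v} C]

lemma rst_idem' [RestrictionCat C] {A B : C} (f : A ⟶ B) :
    rst f ≫ rst f = rst f := by
  have h := rst_rst f f
  rw [rst_comp] at h
  exact h.symm

lemma rst_comp_abs' [RestrictionCat C] {A B D : C} (h : A ⟶ B) (k : B ⟶ D) :
    rst (h ≫ k) ≫ rst h = rst (h ≫ k) := by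
  rw [rst_comm]
  have h1 : rst (rst h ≫ (h ≫ k)) = rst h ≫ rst (h ≫ k) := rst_rst _ _
  rw [← Category.assoc, rst_comp] at h1
  exact h1.symm

lemma rst_pair_abs' [CLARC C] {X A B' : C} (a : X ⟶ A) (b : X ⟶ B') :
    rst a ≫ pair a b = pair a b := by
  rw [comp_pair, rst_comp]
  have e1 : pair a b = pair (rst b ≫ a) (rst a ≫ b) := by
    conv_lhs => rw [← pair_eta (pair a b), pair_p0, pair_p1]
  have e2 : pair a (rst a ≫ b) = pair (rst b ≫ a) (rst a ≫ b) := by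
    conv_lhs => rw [← pair_eta (pair a (rst a ≫ b)), pair_p0, pair_p1]
    rw [rst_rst, ← Category.assoc (rst a) (rst a) b, rst_idem',
      rst_comm, Category.assoc, rst_comp]
  rw [e1, e2]

lemma aux2' [RDRC C] {A B D : C} (t : prod A B ⟶ A) (u : A ⟶ D) :
    pair p0 t ≫ pair (p0 ≫ rst u) p1 ≫ p1 = rst (p0 ≫ rst u) ≫ t := by
  calc pair p0 t ≫ pair (p0 ≫ rst u) p1 ≫ p1
      = (pair p0 t ≫ pair (p0 ≫ rst u) p1) ≫ p1 := by rw [Category.assoc]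
    _ = pair (pair p0 t ≫ (p0 ≫ rst u)) (pair p0 t ≫ p1) ≫ p1 := by rw [comp_pair]
    _ = rst (pair p0 t ≫ (p0 ≫ rst u)) ≫ (pair p0 t ≫ p1) := by rw [pair_p1]
    _ = rst ((pair p0 t ≫ p0) ≫ rst u) ≫ (pair p0 t ≫ p1) := by rw [Category.assoc]
    _ = rst ((rst t ≫ p0) ≫ rst u) ≫ (rst p0 ≫ t) := by rw [pair_p0, pair_p1]
    _ = rst (rst t ≫ (p0 ≫ rst u)) ≫ (rst p0 ≫ t) := by rw [Category.assoc]
    _ = (rst t ≫ rst (p0 ≫ rst u)) ≫ (rst p0 ≫ t) := by rw [rst_rst]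
    _ = rst t ≫ (rst (p0 ≫ rst u) ≫ rst p0) ≫ t := by simp only [Category.assoc]
    _ = rst t ≫ rst (p0 ≫ rst u) ≫ t := by rw [rst_comp_abs']
    _ = (rst t ≫ rst (p0 ≫ rst u)) ≫ t := by rw [Category.assoc]
    _ = (rst (p0 ≫ rst u) ≫ rst t) ≫ t := by rw [rst_comm]
    _ = rst (p0 ≫ rst u) ≫ rst t ≫ t := by rw [Category.assoc]
    _ = rst (p0 ≫ rst u) ≫ t := by rw [rst_comp]

end Aux

/-- In a reverse differential restriction category, the reverse
differential operator is monotone: if `f ≤ g` then `R[f] ≤ R[g]`. -/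
theorem Rd_monotone {C : Type u} [Category.{v} C] [RDRC C]
    {A B : C} (f g : A ⟶ B) (h : rle f g) : rle (Rd f) (Rd g) := by
  unfold rle at h ⊢
  rw [RD8]
  have key : Rd f = pair (p0 ≫ rst f) p1 ≫ Rd g := by
    calc Rd f = Rd (rst f ≫ g) := by rw [h]
      _ = pair p0 (pair (p0 ≫ rst f) p1 ≫ Rd g) ≫ Rd (rst f) := RD5 _ _
      _ = pair p0 (pair (p0 ≫ rst f) p1 ≫ Rd g) ≫ pair (p0 ≫ rst f) p1 ≫ p1 := by
            rw [RD9]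
      _ = rst (p0 ≫ rst f) ≫ (pair (p0 ≫ rst f) p1 ≫ Rd g) := aux2' _ _
      _ = (rst (p0 ≫ rst f) ≫ pair (p0 ≫ rst f) p1) ≫ Rd g := by rw [Category.assoc]
      _ = pair (p0 ≫ rst f) p1 ≫ Rd g := by rw [rst_pair_abs']
  exact key.symm
end

section
/- In a reverse differential restriction category, the derived forward derivative satisfies the restriction axiom: (D[f])‾ = f̄ × 1. -/
open CategoryTheory

universe v u

open RestrictionCat

open CLARC

open RDRC

variable {C : Type u} [Category.{v} C]

/-- The forward derivative derived from the reverse derivative: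
`D[f] := ⟨⟨π₀, 0⟩, π₁⟩ ≫ R[R[f]] ≫ π₁`. -/
def Dop [RDRC C] {A B : C} (f : A ⟶ B) : prod A A ⟶ B :=
  pair (pair p0 (zero : prod A A ⟶ B)) p1 ≫ Rd (Rd f) ≫ p1


section Aux
variable [RDRC C]

lemma rst_one {A : C} : rst (𝟙 A) = 𝟙 A := by
  simpa using rst_comp (𝟙 A)

lemma rst_rst_self {A B : C} (f : A ⟶ B) : rst (rst f) = rst f := by
  have h := rst_rst (𝟙 A) f
  simpa [rst_one] using h

lemma rst_le_comp {A B D : C} (f : A ⟶ B) (g : B ⟶ D) :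
    rst (f ≫ g) ≫ rst f = rst (f ≫ g) := by
  have h1 : rst f ≫ f ≫ g = f ≫ g := by rw [← Category.assoc, rst_comp]
  calc rst (f ≫ g) ≫ rst f = rst f ≫ rst (f ≫ g) := (rst_comm _ _)
    _ = rst (rst f ≫ f ≫ g) := (rst_rst _ _).symm
    _ = rst (f ≫ g) := by rw [h1]

lemma rst_comp_rst {A B D : C} (f : A ⟶ B) (g : B ⟶ D) :
    rst (f ≫ rst g) = rst (f ≫ g) := by
  rw [rst_slide f g, rst_rst, rst_le_comp]

lemma rst_comp_total {A B D : C} (f : A ⟶ B) (g : B ⟶ D) (hg : rst g = 𝟙 B) :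
    rst (f ≫ g) = rst f := by
  rw [← rst_comp_rst, hg, Category.comp_id]

lemma total_of_section {A B : C} (s : A ⟶ B) (g : B ⟶ A) (h : s ≫ g = 𝟙 A) :
    rst s = 𝟙 A := by
  have h2 := rst_le_comp s g
  rw [h, rst_one, Category.id_comp] at h2
  exact h2

lemma pair_one_zero_total {A B : C} :
    rst (pair (𝟙 A) (zero : A ⟶ B)) = 𝟙 A := by
  apply total_of_section _ p0
  rw [pair_p0, zero_total, Category.id_comp]

lemma rst_p1_formula {A B : C} :
    rst (p1 : prod (prod A B) A ⟶ A)
      = pair (p0 ≫ rst (p0 : prod A B ⟶ A)) p1 := by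
  have h8 := RD8 (p0 : prod A B ⟶ A)
  rw [RD3a, rst_comp_total _ _ pair_one_zero_total] at h8
  exact h8

lemma p0_total {A B : C} : rst (p0 : prod A B ⟶ A) = 𝟙 (prod A B) := by
  set T : prod A B ⟶ prod (prod A B) A := pair (𝟙 (prod A B)) zero with hT
  have hTp1 : T ≫ p1 = (zero : prod A B ⟶ A) := by
    rw [hT, pair_p1, rst_one, Category.id_comp]
  have hTp0 : T ≫ p0 = 𝟙 (prod A B) := by
    rw [hT, pair_p0, zero_total, Category.id_comp]
  have h1 : T ≫ rst (p1 : prod (prod A B) A ⟶ A) = T := by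
    rw [rst_slide, hTp1, zero_total, Category.id_comp]
  have h2 : T ≫ rst (p1 : prod (prod A B) A ⟶ A)
      = pair (rst (p0 : prod A B ⟶ A)) (zero : prod A B ⟶ A) := by
    rw [rst_p1_formula, comp_pair, ← Category.assoc, hTp0, Category.id_comp, hTp1]
  have h3 : pair (rst (p0 : prod A B ⟶ A)) (zero : prod A B ⟶ A)
      = pair (𝟙 (prod A B)) zero := by rw [← h2, h1, hT]
  have h4 := congrArg (fun x => x ≫ (p0 : prod (prod A B) A ⟶ prod A B)) h3
  simpa [pair_p0, zero_total] using h4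

lemma p1_total {A B : C} : rst (p1 : prod A B ⟶ B) = 𝟙 (prod A B) := by
  have hid : pair (p0 : prod A B ⟶ A) p1 = 𝟙 (prod A B) := by
    simpa using pair_eta (𝟙 (prod A B))
  have h : rst (p1 : prod A B ⟶ B) ≫ p0 = p0 := by
    rw [← pair_p0 (p0 : prod A B ⟶ A) p1, hid, Category.id_comp]
  calc rst (p1 : prod A B ⟶ B)
      = rst (p1 : prod A B ⟶ B) ≫ rst (p0 : prod A B ⟶ A) := by
        rw [p0_total, Category.comp_id]
    _ = rst (rst (p1 : prod A B ⟶ B) ≫ p0) := (rst_rst _ _).symm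
    _ = rst (p0 : prod A B ⟶ A) := by rw [h]
    _ = 𝟙 (prod A B) := p0_total

lemma rst_pair {X A B : C} (f : X ⟶ A) (g : X ⟶ B) :
    rst (pair f g) = rst f ≫ rst g := by
  calc rst (pair f g) = rst (pair f g ≫ p0) := (rst_comp_total _ _ p0_total).symm
    _ = rst (rst g ≫ f) := by rw [pair_p0]
    _ = rst g ≫ rst f := rst_rst _ _
    _ = rst f ≫ rst g := rst_comm _ _

lemma rst_p0_comp {A B : C} (f : A ⟶ B) :
    rst ((p0 : prod A A ⟶ A) ≫ f) = pair (p0 ≫ rst f) p1 := by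
  have h8 := RD8 (rst f)
  rw [RD9, rst_comp_total _ _ p1_total, rst_pair, p1_total, Category.comp_id,
    rst_comp_rst, rst_rst_self] at h8
  exact h8

end Aux

/-- In a reverse differential restriction category, the derived
forward derivative satisfies the restriction axiom `rst (D[f]) = rst f × 1`. -/
theorem rst_Dop {A B : C} [RDRC C] (f : A ⟶ B) :
    rst (Dop f) = pair (p0 ≫ rst f) p1 := by
  rw [Dop]
  have hhp0 : pair (pair (p0 : prod A A ⟶ A) (zero : prod A A ⟶ B)) p1 ≫ p0
      = pair (p0 : prod A A ⟶ A) (zero : prod A A ⟶ B) := by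
    rw [pair_p0, p1_total, Category.id_comp]
  have hhp1 : pair (pair (p0 : prod A A ⟶ A) (zero : prod A A ⟶ B)) p1 ≫ p1
      = (p1 : prod A A ⟶ A) := by
    rw [pair_p1, rst_pair, p0_total, zero_total, Category.id_comp, Category.id_comp]
  calc rst (pair (pair (p0 : prod A A ⟶ A) (zero : prod A A ⟶ B)) p1 ≫ Rd (Rd f) ≫ p1)
      = rst ((pair (pair (p0 : prod A A ⟶ A) (zero : prod A A ⟶ B)) p1 ≫ Rd (Rd f)) ≫ p1) := by
        rw [Category.assoc]
    _ = rst (pair (pair (p0 : prod A A ⟶ A) (zero : prod A A ⟶ B)) p1 ≫ Rd (Rd f)) :=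
        rst_comp_total _ _ p1_total
    _ = rst (pair (pair (p0 : prod A A ⟶ A) (zero : prod A A ⟶ B)) p1 ≫ rst (Rd (Rd f))) :=
        (rst_comp_rst _ _).symm
    _ = rst (pair (pair (p0 : prod A A ⟶ A) (zero : prod A A ⟶ B)) p1 ≫ pair (p0 ≫ rst (Rd f)) p1) := by
        rw [RD8 (Rd f)]
    _ = rst (pair (pair (p0 : prod A A ⟶ A) (zero : prod A A ⟶ B)) p1
          ≫ (p0 ≫ rst (Rd f))) ≫ rst (pair (pair (p0 : prod A A ⟶ A) (zero : prod A A ⟶ B)) p1 ≫ p1) := by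
        rw [comp_pair, rst_pair]
    _ = rst (pair (p0 : prod A A ⟶ A) (zero : prod A A ⟶ B) ≫ rst (Rd f)) := by
        rw [hhp1, p1_total, Category.comp_id, ← Category.assoc, hhp0]
    _ = rst (pair (p0 : prod A A ⟶ A) (zero : prod A A ⟶ B) ≫ Rd f) := rst_comp_rst _ _
    _ = rst (rst ((p0 : prod A A ⟶ A) ≫ f) ≫ (zero : prod A A ⟶ A)) := congrArg rst (RD2b _ _)
    _ = rst ((p0 : prod A A ⟶ A) ≫ f) ≫ rst (zero : prod A A ⟶ A) := rst_rst _ _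
    _ = rst ((p0 : prod A A ⟶ A) ≫ f) := by rw [zero_total, Category.comp_id]
    _ = pair (p0 ≫ rst f) p1 := rst_p0_comp f
end
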